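/- Let A, B ⊂ 𝕊 be two finite sets. There exists an element c ∈ 𝕋± such that c ⊖ a ⊵ 𝟘 and b ⊖ c ⊵ 𝟘 for all a ∈ A and b ∈ B if and only if b ⊖ a ⊵ 𝟘 for all pairs (a,b) ∈ A × B. -/

import Mathlib

/-!  Signed tropical numbers 𝕋±, the symmetrized tropical semiring 𝕊,
     and signed tropical convexity (Loho–Végh). -/

inductive SSign : Type where
  | pos : SSign
  | neg : SSign
  | bal : SSign
deriving DecidableEq

/-- The symmetrized tropical semiring 𝕊: the tropical zero 𝟘 = -∞ together with
elements `elem s r` where `s` is a sign (⊕, ⊖ or •) and `r` a real number. -/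
inductive STrop : Type where
  | zero : STrop
  | elem : SSign → ℝ → STrop

namespace STrop

/-- membership in the signed tropical numbers 𝕋± (i.e. not balanced-nonzero). -/
def isSigned : STrop → Prop
  | elem SSign.bal _ => False
  | _ => True

/-- membership in 𝕋≥, the nonnegative tropical numbers. -/
def nneg : STrop → Prop
  | zero => True
  | elem SSign.pos _ => True
  | _ => False

/-- membership in 𝕋≤, the nonpositive tropical numbers. -/
def npos : STrop → Prop
  | zero => True
  | elem SSign.neg _ => True
  | _ => False

/-- strictly positive signed element (sign ⊕, not 𝟘). -/
def isPos : STrop → Prop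
  | elem SSign.pos _ => True
  | _ => False

/-- balanced or 𝟘 (membership in 𝕋•). -/
def balZero : STrop → Prop
  | zero => True
  | elem SSign.bal _ => True
  | _ => False

/-- the negation map ⊖. -/
def neg : STrop → STrop
  | zero => zero
  | elem SSign.pos r => elem SSign.neg r
  | elem SSign.neg r => elem SSign.pos r
  | elem SSign.bal r => elem SSign.bal r

/-- tropical addition ⊕ on 𝕊. -/
noncomputable def add : STrop → STrop → STrop
  | zero, y => y
  | x, zero => x
  | elem s r, elem t u =>
    if r < u then elem t u
    else if u < r then elem s r
    else if s = t then elem s r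
    else elem SSign.bal r

def signMul : SSign → SSign → SSign
  | SSign.pos, t => t
  | SSign.neg, SSign.pos => SSign.neg
  | SSign.neg, SSign.neg => SSign.pos
  | SSign.neg, SSign.bal => SSign.bal
  | SSign.bal, _ => SSign.bal

/-- tropical multiplication ⊙ on 𝕊. -/
def mul : STrop → STrop → STrop
  | zero, _ => zero
  | _, zero => zero
  | elem s r, elem t u => elem (signMul s t) (r + u)

/-- a ⊖ b := a ⊕ (⊖b). -/
noncomputable def sub (x y : STrop) : STrop := add x (neg y)

/-- the tropical one, the signed element ⊕0. -/
def one : STrop := elem SSign.pos 0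

/-- the absolute value |·| : 𝕊 → 𝕋≥. -/
def absS : STrop → STrop
  | zero => zero
  | elem _ r => elem SSign.pos r

/-- strict order: x > y iff x ⊖ y is a strictly positive signed element. -/
def sgt (x y : STrop) : Prop := isPos (sub x y)

/-- balance relation: x ⋈ y iff x ⊖ y is balanced or 𝟘. -/
def bal (x y : STrop) : Prop := balZero (sub x y)

/-- the relation ⊵ : x ⊵ y iff x > y or x ⋈ y. -/
def teq (x y : STrop) : Prop := sgt x y ∨ bal x y

/-- the total order ≤ on the signed tropical numbers 𝕋±
(arbitrarily `False` whenever a balanced element is involved). -/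
def sle : STrop → STrop → Prop
  | zero, zero => True
  | zero, elem SSign.pos _ => True
  | elem SSign.neg _, zero => True
  | elem SSign.neg _, elem SSign.pos _ => True
  | elem SSign.pos r, elem SSign.pos u => r ≤ u
  | elem SSign.neg r, elem SSign.neg u => u ≤ r
  | _, _ => False

/-- U(a): the set of signed numbers incomparable with a; the singleton {a}
for signed a, and the order interval [⊖|a|, |a|] for balanced a. -/
def U : STrop → Set STrop
  | elem SSign.bal r => {x | isSigned x ∧ sle (elem SSign.neg r) x ∧ sle x (elem SSign.pos r)}
  | a => {a}

/-- tropical sum of finitely many elements of 𝕊. -/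
noncomputable def sumFin : ∀ {n : ℕ}, (Fin n → STrop) → STrop
  | 0, _ => zero
  | _ + 1, f => add (f 0) (sumFin fun i => f i.succ)

/-- matrix–vector product A ⊙ x over 𝕊. -/
noncomputable def mv {d n : ℕ} (A : Fin d → Fin n → STrop) (x : Fin n → STrop) : Fin d → STrop :=
  fun i => sumFin fun j => mul (A i j) (x j)

/-- vectors in 𝕋±^d. -/
def isSignedVec {d : ℕ} (v : Fin d → STrop) : Prop := ∀ i, isSigned (v i)

/-- the signed tropical convex hull of the columns of a matrix A:
tconv(A) = {z ∈ 𝕋±^d : z ⋈ A⊙x for some x ∈ 𝕋≥^n with ⊕_j x_j = 0}. -/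
def tconv {d n : ℕ} (A : Fin d → Fin n → STrop) : Set (Fin d → STrop) :=
  {z | isSignedVec z ∧ ∃ x : Fin n → STrop,
    (∀ j, nneg (x j)) ∧ sumFin x = one ∧ ∀ i, bal (z i) (mv A x i)}

/-- the signed tropical convex hull of an arbitrary set: the union of the hulls
of all finite collections of points of M. -/
def tconvSet {d : ℕ} (M : Set (Fin d → STrop)) : Set (Fin d → STrop) :=
  ⋃ (n : ℕ) (A : Fin d → Fin n → STrop) (_ : ∀ j, (fun i => A i j) ∈ M), tconv A

/-- a set M ⊆ 𝕋±^d is tropically convex iff M = tconv(M). -/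
def TropConvex {d : ℕ} (M : Set (Fin d → STrop)) : Prop := M = tconvSet M

/-- evaluation a ⊙ (0, x₁, …, x_d)ᵀ of an affine functional. -/
noncomputable def affEval {d : ℕ} (a : Fin (d + 1) → STrop) (x : Fin d → STrop) : STrop :=
  sumFin fun j => mul (a j) ((Fin.cons one x : Fin (d + 1) → STrop) j)

/-- the open signed tropical halfspace H⁺(a) = {x ∈ 𝕋±^d : a⊙(0,x)ᵀ > 𝟘}. -/
def Hopen {d : ℕ} (a : Fin (d + 1) → STrop) : Set (Fin d → STrop) :=
  {x | isSignedVec x ∧ sgt (affEval a x) zero}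

/-- the closed signed tropical halfspace H̄⁺(a) = {x ∈ 𝕋±^d : a⊙(0,x)ᵀ ⊵ 𝟘}. -/
def Hclosed {d : ℕ} (a : Fin (d + 1) → STrop) : Set (Fin d → STrop) :=
  {x | isSignedVec x ∧ teq (affEval a x) zero}

/-- the non-negative kernel nnker(A). -/
def nnker {d n : ℕ} (A : Fin d → Fin n → STrop) : Set (Fin n → STrop) :=
  {x | (∀ j, nneg (x j)) ∧ x ≠ (fun _ => zero) ∧ ∀ i, balZero (mv A x i)}

/-- the open tropical cone sep(A) = {y ∈ 𝕋±^d : yᵀ⊙A > 𝟘 componentwise}. -/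
def sep {d : ℕ} {J : Type} (A : Fin d → J → STrop) : Set (Fin d → STrop) :=
  {y | isSignedVec y ∧ ∀ j, isPos (sumFin fun i => mul (y i) (A i j))}

end STrop

/-! Replacing a balanced `•r` by the endpoints `⊖r`, `⊕r` of the interval `U(•r)`, the relation
`b ⊖ a ⊵ 𝟘` says exactly that the lower end of `a` is at most the upper end of `b` in the total
order of 𝕋±. The theorem is therefore the separation of finitely many lower bounds from finitely
many upper bounds in a linear order: the least upper bound (or else the greatest lower bound,
or else `𝟘`) is a signed element lying between them. -/

theorem exists_mem_between_iff {ι κ β : Type*} [LinearOrder β] {S : Set β} (hS : S.Nonempty)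
    {A : Finset ι} {B : Finset κ} {lo : ι → β} {hi : κ → β}
    (hlo : ∀ a ∈ A, lo a ∈ S) (hhi : ∀ b ∈ B, hi b ∈ S) :
    (∃ c ∈ S, (∀ a ∈ A, lo a ≤ c) ∧ ∀ b ∈ B, c ≤ hi b) ↔ ∀ a ∈ A, ∀ b ∈ B, lo a ≤ hi b := by
  refine ⟨fun ⟨c, _, hA, hB⟩ a ha b hb => (hA a ha).trans (hB b hb), fun h => ?_⟩
  rcases B.eq_empty_or_nonempty with rfl | hB
  · rcases A.eq_empty_or_nonempty with rfl | hA
    · obtain ⟨c, hc⟩ := hS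
      exact ⟨c, hc, by simp, by simp⟩
    · obtain ⟨a₀, ha₀, hmax⟩ := A.exists_max_image lo hA
      exact ⟨lo a₀, hlo a₀ ha₀, hmax, by simp⟩
  · obtain ⟨b₀, hb₀, hmin⟩ := B.exists_min_image hi hB
    exact ⟨hi b₀, hhi b₀ hb₀, fun a ha => h a ha b₀ hb₀, hmin⟩

namespace STrop

/-- An order embedding of 𝕋± into `ℤ ×ₗ ℝ`; balanced elements get a junk value. -/
noncomputable def rank : STrop → ℤ ×ₗ ℝ
  | elem SSign.pos r => toLex (1, r)
  | elem SSign.neg r => toLex (-1, -r)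
  | _ => toLex (0, 0)

def lowerEnd : STrop → STrop
  | elem SSign.bal r => elem SSign.neg r
  | a => a

def upperEnd : STrop → STrop
  | elem SSign.bal r => elem SSign.pos r
  | a => a

theorem isSigned_lowerEnd (a : STrop) : isSigned (lowerEnd a) := by
  rcases a with _ | ⟨_ | _ | _, _⟩ <;> trivial

theorem isSigned_upperEnd (a : STrop) : isSigned (upperEnd a) := by
  rcases a with _ | ⟨_ | _ | _, _⟩ <;> trivial

theorem lowerEnd_of_isSigned {c : STrop} (hc : isSigned c) : lowerEnd c = c := by
  rcases c with _ | ⟨_ | _ | _, _⟩ <;> first | rfl | exact hc.elim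

theorem upperEnd_of_isSigned {c : STrop} (hc : isSigned c) : upperEnd c = c := by
  rcases c with _ | ⟨_ | _ | _, _⟩ <;> first | rfl | exact hc.elim

theorem teq_zero_iff (x : STrop) : teq x zero ↔ isPos x ∨ balZero x := by
  rcases x with _ | ⟨_ | _ | _, _⟩ <;> rfl

theorem teq_sub_zero_iff_rank_le (a b : STrop) :
    teq (sub b a) zero ↔ rank (lowerEnd a) ≤ rank (upperEnd b) := by
  rw [teq_zero_iff]
  rcases a with _ | ⟨_ | _ | _, r⟩ <;> rcases b with _ | ⟨_ | _ | _, u⟩ <;>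
    simp only [sub, neg, add, lowerEnd, upperEnd, rank, isPos, balZero, Prod.Lex.toLex_le_toLex] <;>
    (try split_ifs) <;> simp_all <;> linarith

end STrop

open STrop in
/-- elimination for non-strict inequalities: a signed c with
c ⊖ a ⊵ 𝟘 and b ⊖ c ⊵ 𝟘 for all a ∈ A, b ∈ B exists iff b ⊖ a ⊵ 𝟘 for all pairs. -/
theorem elimination_non_strict (A B : Finset STrop) :
    (∃ c : STrop, STrop.isSigned c ∧
        (∀ a ∈ A, STrop.teq (STrop.sub c a) STrop.zero) ∧
        (∀ b ∈ B, STrop.teq (STrop.sub b c) STrop.zero)) ↔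
      (∀ a ∈ A, ∀ b ∈ B, STrop.teq (STrop.sub b a) STrop.zero) := by
  simp only [teq_sub_zero_iff_rank_le]
  rw [← exists_mem_between_iff (S := rank '' {c | isSigned c}) ⟨_, zero, trivial, rfl⟩
    (fun a _ => ⟨_, isSigned_lowerEnd a, rfl⟩) (fun b _ => ⟨_, isSigned_upperEnd b, rfl⟩),
    Set.exists_mem_image]
  refine exists_congr fun c => and_congr_right fun hc => ?_
  rw [lowerEnd_of_isSigned hc, upperEnd_of_isSigned hc]
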